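/- arXiv:1410.0062 — 3 statements merged into one kernel-verified Lean document; each statement's English description precedes it below -/
import Mathlib

section
/- Let (X,d) be a metric space of cardinality 2n and let Π = {{x_1^+,…,x_n^+},{x_1^-,…,x_n^-}} be a partition of X into two n-tuples of points. Define M(Π,d') := min over permutations σ of {1,…,n} of ∑_{i=1}^n d'(x_i^+, x_{σ(i)}^-) for any pseudometric d' on X. Then M(Π,d) = max over all 1-Lipschitz functions f : X → ℝ of M(Π, f*d_ℝ), where f*d_ℝ(x,y) := |f(x) − f(y)|, and the maximum is attained. -/
/-!
By Birkhoff's theorem, a nonnegative matrix whose row sums equal its column sums pairs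
nonnegatively with every weight `w` that vanishes on the diagonal and has nonnegative sum along
every permutation; applied to edge-count matrices, this says that closed walks have nonnegative
`w`-weight. For an optimal assignment `σ` the reduced costs `w i k = c i (σ k) - c k (σ k)` have
this property, so infima of walk weights form a potential, and the potential gives dual variables
`u`, `v` with `u i + v j ≤ d(x⁺ i, x⁻ j)` and equality along `σ`. The 1-Lipschitz function
`f x = min_j (d(x, x⁻ j) - v j)` is then `≥ u` on `x⁺` and `≤ -v` on `x⁻`, so every pulled-back
assignment cost is at least `∑ u + ∑ v = M(Π,d)`.
-/

open Finset

theorem sum_mul_nonneg_of_rowSum_eq_colSum {ι : Type*} [Fintype ι] [DecidableEq ι]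
    {w : ι → ι → ℝ} (hw : ∀ i, w i i = 0) (hperm : ∀ τ : Equiv.Perm ι, 0 ≤ ∑ i, w i (τ i))
    {N : Matrix ι ι ℝ} (hN : ∀ i k, 0 ≤ N i k) (hbal : ∀ i, ∑ k, N i k = ∑ k, N k i) :
    0 ≤ ∑ i, ∑ k, N i k * w i k := by
  set r : ι → ℝ := fun i => ∑ k, N i k
  have hr : ∀ i, 0 ≤ r i := fun i => sum_nonneg fun k _ => hN i k
  set R : ℝ := 1 + ∑ i, r i
  have hr_lt : ∀ i, r i < R := fun i => by
    have := single_le_sum (fun i _ => hr i) (mem_univ i)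
    linarith
  have hR : 0 < R := by
    have := sum_nonneg fun i (_ : i ∈ univ) => hr i
    linarith
  -- Padding the diagonal makes every row and column sum equal to `R`.
  set M := N + Matrix.diagonal (fun i => R - r i)
  have hM : ∃ M' ∈ doublyStochastic ℝ ι, M = R • M' := by
    rw [exists_mem_doublyStochastic_eq_smul_iff hR.le]
    refine ⟨fun i k => ?_, fun i => ?_, fun k => ?_⟩
    · simp only [M, Matrix.add_apply, Matrix.diagonal_apply]
      split_ifs with h
      · subst h
        linarith [hN i i, hr_lt i]
      · linarith [hN i k]
    · simp [M, Matrix.diagonal_apply, sum_add_distrib, r]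
    · simp [M, Matrix.diagonal_apply, sum_add_distrib, r, hbal]
  obtain ⟨M', hM', hMM'⟩ := hM
  obtain ⟨c, hc, -, hc'⟩ := exists_eq_sum_perm_of_mem_doublyStochastic hM'
  have hpad : ∑ i, ∑ k, M i k * w i k = ∑ i, ∑ k, N i k * w i k := by
    simp [M, Matrix.diagonal_apply, add_mul, sum_add_distrib, hw]
  have hbirkhoff : ∑ i, ∑ k, M i k * w i k = R * ∑ σ, c σ * ∑ i, w i (σ i) := by
    rw [hMM', ← hc']
    simp only [Matrix.smul_apply, Matrix.sum_apply, smul_eq_mul, sum_mul, mul_sum]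
    simp_rw [sum_comm (s := (univ : Finset ι)) (t := (univ : Finset (Equiv.Perm ι))),
      mul_assoc, ← mul_sum]
    simp [Equiv.toPEquiv_apply]
  rw [← hpad, hbirkhoff]
  exact mul_nonneg hR.le (sum_nonneg fun σ _ => mul_nonneg (hc σ) (hperm σ))

section Walk

variable {ι : Type*} (w : ι → ι → ℝ)

def walkWeight (s : ℕ → ι) (m : ℕ) : ℝ :=
  ∑ j ∈ range m, w (s j) (s (j + 1))

theorem walkWeight_update_succ (s : ℕ → ι) (m : ℕ) (x : ι) :
    walkWeight w (Function.update s (m + 1) x) (m + 1) = walkWeight w s m + w (s m) x := by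
  rw [walkWeight, sum_range_succ, Function.update_self, Function.update_of_ne (by omega)]
  congr 1
  refine sum_congr rfl fun j hj => ?_
  rw [mem_range] at hj
  rw [Function.update_of_ne (by omega), Function.update_of_ne (by omega)]

def walkWeightsTo (k : ι) : Set ℝ :=
  {r | ∃ s m, s m = k ∧ walkWeight w s m = r}

theorem walkWeightsTo_nonempty (k : ι) : (walkWeightsTo w k).Nonempty :=
  ⟨0, fun _ => k, 0, rfl, by simp [walkWeight]⟩

variable [Fintype ι] [DecidableEq ι] {w}
  (hw : ∀ i, w i i = 0) (hperm : ∀ τ : Equiv.Perm ι, 0 ≤ ∑ i, w i (τ i))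
include hw hperm

theorem walkWeight_nonneg_of_closed {s : ℕ → ι} {m : ℕ} (hs : s m = s 0) :
    0 ≤ walkWeight w s m := by
  let N : Matrix ι ι ℝ := fun i k => ∑ j ∈ range m, if s j = i ∧ s (j + 1) = k then 1 else 0
  have hshift : ∀ g : ι → ℝ, ∑ j ∈ range m, g (s (j + 1)) = ∑ j ∈ range m, g (s j) := fun g => by
    have h := sum_range_succ (fun j => g (s j)) m
    rw [sum_range_succ', hs] at h
    linarith
  have hbal : ∀ i, ∑ k, N i k = ∑ k, N k i := fun i => by
    simp only [N]
    rw [sum_comm, sum_comm (s := univ)]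
    simpa [ite_and, eq_comm] using (hshift fun k => if k = i then 1 else 0).symm
  have hpair : ∑ i, ∑ k, N i k * w i k = walkWeight w s m := by
    simp only [N, sum_mul, walkWeight, ite_and, ite_mul, one_mul, zero_mul]
    rw [sum_comm]
    simp [sum_comm (s := univ)]
  exact hpair ▸ sum_mul_nonneg_of_rowSum_eq_colSum hw hperm
    (fun i k => sum_nonneg fun j _ => by positivity) hbal

theorem bddBelow_walkWeightsTo (k : ι) : BddBelow (walkWeightsTo w k) := by
  refine ⟨-∑ a, |w k a|, ?_⟩
  rintro _ ⟨s, m, rfl, rfl⟩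
  -- Returning to the starting point closes the walk.
  have hclosed := walkWeight_nonneg_of_closed hw hperm
    (s := Function.update s (m + 1) (s 0)) (m := m + 1) (by simp)
  rw [walkWeight_update_succ] at hclosed
  have : w (s m) (s 0) ≤ ∑ a, |w (s m) a| :=
    (le_abs_self _).trans (single_le_sum (fun a _ => abs_nonneg (w (s m) a)) (mem_univ _))
  linarith

theorem exists_potential : ∃ p : ι → ℝ, ∀ i k, p k ≤ p i + w i k := by
  refine ⟨fun k => sInf (walkWeightsTo w k), fun i k => ?_⟩
  rw [← sub_le_iff_le_add]
  refine le_csInf (walkWeightsTo_nonempty w i) ?_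
  rintro _ ⟨s, m, rfl, rfl⟩
  rw [sub_le_iff_le_add, ← walkWeight_update_succ]
  exact csInf_le (bddBelow_walkWeightsTo hw hperm k) ⟨_, m + 1, by simp, rfl⟩

end Walk

theorem exists_tight_dual_assignment {ι : Type*} [Fintype ι] [DecidableEq ι]
    (c : ι → ι → ℝ) :
    ∃ (σ : Equiv.Perm ι) (u v : ι → ℝ),
      (∀ i j, u i + v j ≤ c i j) ∧ ∀ i, u i + v (σ i) = c i (σ i) := by
  obtain ⟨σ, hσ⟩ := Finite.exists_min fun σ : Equiv.Perm ι => ∑ i, c i (σ i)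
  have hperm : ∀ τ : Equiv.Perm ι, 0 ≤ ∑ i, (c i (σ (τ i)) - c (τ i) (σ (τ i))) := fun τ => by
    rw [sum_sub_distrib, Equiv.sum_comp τ fun k => c k (σ k), sub_nonneg]
    exact hσ (τ.trans σ)
  obtain ⟨p, hp⟩ := exists_potential (w := fun i k => c i (σ k) - c k (σ k))
    (fun i => sub_self _) hperm
  refine ⟨σ, fun i => -p i, fun j => p (σ.symm j) + c (σ.symm j) j, fun i j => ?_, fun i => ?_⟩
  · have := hp i (σ.symm j)
    simp only [Equiv.apply_symm_apply] at this
    linarith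
  · simp

theorem LipschitzWith.ciInf {α κ : Type*} [PseudoMetricSpace α] [Finite κ] {K : NNReal}
    {f : κ → α → ℝ} (hf : ∀ j, LipschitzWith K (f j)) :
    LipschitzWith K fun x => ⨅ j, f j x := by
  cases isEmpty_or_nonempty κ
  · simpa using LipschitzWith.const' (α := α) (0 : ℝ)
  refine LipschitzWith.of_le_add_mul K fun x y => sub_le_iff_le_add.1 (le_ciInf fun j => ?_)
  exact sub_le_iff_le_add.2
    ((ciInf_le (Set.finite_range _).bddBelow j).trans ((hf j).le_add_mul x y))

theorem exists_lipschitzWith_one_of_add_le_dist {X ι : Type*} [PseudoMetricSpace X] [Finite ι]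
    {xp xm : ι → X} {u v : ι → ℝ} (h : ∀ i j, u i + v j ≤ dist (xp i) (xm j)) :
    ∃ f : X → ℝ, LipschitzWith 1 f ∧ (∀ i, u i ≤ f (xp i)) ∧ ∀ j, f (xm j) ≤ -v j := by
  refine ⟨fun x => ⨅ j, dist x (xm j) - v j, ?_, fun i => ?_, fun j => ?_⟩
  · exact LipschitzWith.ciInf fun j => by
      simpa using (LipschitzWith.dist_left (xm j)).sub (LipschitzWith.const (v j))
  · have : Nonempty ι := ⟨i⟩
    exact le_ciInf fun j => le_sub_iff_add_le.2 (h i j)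
  · simpa using ciInf_le (Set.finite_range fun j' => dist (xm j) (xm j') - v j').bddBelow j

theorem LipschitzWith.iInf_sum_abs_sub_le {X ι : Type*} [PseudoMetricSpace X] [Fintype ι]
    [DecidableEq ι] {f : X → ℝ} (hf : LipschitzWith 1 f) (xp xm : ι → X) :
    (⨅ σ : Equiv.Perm ι, ∑ i, |f (xp i) - f (xm (σ i))|) ≤
      ⨅ σ : Equiv.Perm ι, ∑ i, dist (xp i) (xm (σ i)) :=
  ciInf_mono (Set.finite_range _).bddBelow fun σ => sum_le_sum fun i _ => by
    simpa [Real.dist_eq] using hf.dist_le_mul (xp i) (xm (σ i))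

theorem stmt2_general {X : Type*} [MetricSpace X] (n : ℕ) (xp xm : Fin n → X) :
    (∀ f : X → ℝ, LipschitzWith 1 f →
      (⨅ σ : Equiv.Perm (Fin n), ∑ i, |f (xp i) - f (xm (σ i))|) ≤
        ⨅ σ : Equiv.Perm (Fin n), ∑ i, dist (xp i) (xm (σ i))) ∧
    ∃ f : X → ℝ, LipschitzWith 1 f ∧
      (⨅ σ : Equiv.Perm (Fin n), ∑ i, |f (xp i) - f (xm (σ i))|) =
        ⨅ σ : Equiv.Perm (Fin n), ∑ i, dist (xp i) (xm (σ i)) := by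
  obtain ⟨σ, u, v, hfeas, htight⟩ := exists_tight_dual_assignment fun i j => dist (xp i) (xm j)
  obtain ⟨f, hf, hfp, hfm⟩ := exists_lipschitzWith_one_of_add_le_dist hfeas
  refine ⟨fun g hg => hg.iInf_sum_abs_sub_le xp xm, f, hf,
    le_antisymm (hf.iInf_sum_abs_sub_le xp xm) ?_⟩
  calc (⨅ σ : Equiv.Perm (Fin n), ∑ i, dist (xp i) (xm (σ i)))
      ≤ ∑ i, dist (xp i) (xm (σ i)) := ciInf_le (Set.finite_range _).bddBelow σ
    _ = ∑ i, u i + ∑ j, v j := by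
      rw [← sum_congr rfl fun i _ => htight i, sum_add_distrib, Equiv.sum_comp σ v]
    _ ≤ _ := le_ciInf fun τ => by
      rw [← Equiv.sum_comp τ v, ← sum_add_distrib]
      exact sum_le_sum fun i _ => by
        linarith [hfp i, hfm (τ i), le_abs_self (f (xp i) - f (xm (τ i)))]

/-- **Kantorovich duality, pullback formulation.** Let `(X,d)` be a metric space of
cardinality `2n`, partitioned into two `n`-tuples `x⁺`, `x⁻` (the bijectivity of
`Sum.elim x⁺ x⁻` expresses that these `2n` points are distinct and exhaust `X`).
With `M(Π,d') = min_σ ∑ i, d'(x⁺ i, x⁻ (σ i))`, one has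
`M(Π,d) = max { M(Π, f*d_ℝ) | f : X → ℝ is 1-Lipschitz }`, where
`f*d_ℝ(x,y) = |f x - f y|`, and the maximum is attained. -/
theorem stmt2 {X : Type*} [MetricSpace X] (n : ℕ) (xp xm : Fin n → X)
    (hbij : Function.Bijective (Sum.elim xp xm)) :
    (∀ f : X → ℝ, LipschitzWith 1 f →
      (⨅ σ : Equiv.Perm (Fin n), ∑ i, |f (xp i) - f (xm (σ i))|) ≤
        ⨅ σ : Equiv.Perm (Fin n), ∑ i, dist (xp i) (xm (σ i))) ∧
    ∃ f : X → ℝ, LipschitzWith 1 f ∧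
      (⨅ σ : Equiv.Perm (Fin n), ∑ i, |f (xp i) - f (xm (σ i))|) =
        ⨅ σ : Equiv.Perm (Fin n), ∑ i, dist (xp i) (xm (σ i)) :=
  stmt2_general n xp xm
end

section
/- For any pseudometric d on a finite set X of even cardinality, there exists a pseudometric D ≤ d on X with m(X,D) = m(X,d) and with the property that for any other pseudometric D' on X with D' ≤ D (pointwise) and D' ≠ D, one has m(X,D') < m(X,D). -/
/-- A matching on `X`: a partition of `X` into two-element subsets,
encoded as a fixed-point-free involution. -/
def IsMatching {X : Type*} (π : X → X) : Prop :=
  Function.Involutive π ∧ ∀ x, π x ≠ x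

/-- The matching number of a matching `π` with respect to `d`:
`∑_{{x,y} ∈ π} d(x,y)` (each pair is counted twice in the sum, whence the division). -/
noncomputable def matchVal {X : Type*} [Fintype X] (d : X → X → ℝ) (π : X → X) : ℝ :=
  (∑ x, d x (π x)) / 2

/-- The matching number `m(X,d)`: the minimum of `m(π,d)` over all matchings `π` on `X`. -/
noncomputable def matchNum {X : Type*} [Fintype X] (d : X → X → ℝ) : ℝ :=
  sInf {r | ∃ π : X → X, IsMatching π ∧ r = matchVal d π}

/-- `d` is a pseudometric on `X`. -/
def IsPseudometric {X : Type*} (d : X → X → ℝ) : Prop :=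
  (∀ x, d x x = 0) ∧ (∀ x y, d x y = d y x) ∧ ∀ x y z, d x z ≤ d x y + d y z

section Aux

variable {X : Type*} [Fintype X]

lemma pseudo_nonneg {d : X → X → ℝ} (hd : IsPseudometric d) (x y : X) : 0 ≤ d x y := by
  obtain ⟨h0, hs, ht⟩ := hd
  have h1 := ht x y x
  have h2 := hs y x
  have h3 := h0 x
  linarith

lemma exists_matching (hX : Even (Fintype.card X)) : ∃ π : X → X, IsMatching π := by
  obtain ⟨k, hk⟩ := hX
  have e : X ≃ Fin k × Bool := Fintype.equivOfCardEq (by simp [hk]; omega)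
  refine ⟨fun x => e.symm ((e x).1, !(e x).2), fun x => by simp, fun x h => ?_⟩
  apply_fun e at h
  simp [Prod.ext_iff] at h

/-- The set of matching values. -/
def matchSet (d : X → X → ℝ) : Set ℝ :=
  {r | ∃ π : X → X, IsMatching π ∧ r = matchVal d π}

lemma matchSet_finite (d : X → X → ℝ) : (matchSet d).Finite := by
  have hsub : matchSet d ⊆ (matchVal d) '' {π | IsMatching π} := by
    rintro r ⟨π, hπ, rfl⟩; exact ⟨π, hπ, rfl⟩
  exact (Set.Finite.image _ (Set.toFinite _)).subset hsub

lemma matchNum_mem (hX : Even (Fintype.card X)) (d : X → X → ℝ) :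
    matchNum d ∈ matchSet d := by
  obtain ⟨π, hπ⟩ := exists_matching (X := X) hX
  exact Set.Nonempty.csInf_mem ⟨_, π, hπ, rfl⟩ (matchSet_finite d)

lemma matchNum_le {d : X → X → ℝ} {π : X → X} (hπ : IsMatching π) :
    matchNum d ≤ matchVal d π :=
  csInf_le (matchSet_finite d).bddBelow ⟨π, hπ, rfl⟩

lemma matchVal_mono {D' D : X → X → ℝ} (h : ∀ x y, D' x y ≤ D x y) (π : X → X) :
    matchVal D' π ≤ matchVal D π := by
  have : (∑ x, D' x (π x)) ≤ ∑ x, D x (π x) :=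
    Finset.sum_le_sum fun x _ => h x (π x)
  unfold matchVal
  linarith

lemma matchNum_mono (hX : Even (Fintype.card X)) {D' D : X → X → ℝ}
    (h : ∀ x y, D' x y ≤ D x y) : matchNum D' ≤ matchNum D := by
  obtain ⟨π, hπ, hval⟩ := matchNum_mem hX D
  rw [hval]
  exact (matchNum_le hπ).trans (matchVal_mono h π)

lemma matchNum_eq_iff (hX : Even (Fintype.card X)) (D : X → X → ℝ) (m : ℝ) :
    matchNum D = m ↔
      (∀ π : X → X, IsMatching π → m ≤ matchVal D π) ∧
        ∃ π : X → X, IsMatching π ∧ matchVal D π = m := by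
  constructor
  · rintro rfl
    refine ⟨fun π hπ => matchNum_le hπ, ?_⟩
    obtain ⟨π, hπ, hval⟩ := matchNum_mem hX D
    exact ⟨π, hπ, hval.symm⟩
  · rintro ⟨hall, π, hπ, hval⟩
    have h1 : matchNum D ≤ m := hval ▸ matchNum_le hπ
    obtain ⟨π', hπ', hval'⟩ := matchNum_mem hX D
    have h2 : m ≤ matchNum D := hval' ▸ hall π' hπ'
    linarith

lemma continuous_matchVal (π : X → X) :
    Continuous fun D : X → X → ℝ => matchVal D π := by
  unfold matchVal
  exact (continuous_finset_sum _ fun x _ =>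
    (continuous_apply (π x)).comp (continuous_apply x)).div_const 2

end Aux

/-- There is a pseudometric `D ≤ d` on `X` with `m(X,D) = m(X,d)` such that any
pseudometric `D' ≤ D` with `D' ≠ D` satisfies `m(X,D') < m(X,D)`. -/
theorem stmt5 {X : Type*} [Fintype X] (hX : Even (Fintype.card X))
    (d : X → X → ℝ) (hd : IsPseudometric d) :
    ∃ D : X → X → ℝ, IsPseudometric D ∧ (∀ x y, D x y ≤ d x y) ∧
      matchNum D = matchNum d ∧
      ∀ D' : X → X → ℝ, IsPseudometric D' → (∀ x y, D' x y ≤ D x y) → D' ≠ D →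
        matchNum D' < matchNum D := by
  classical
  set m := matchNum d with hm
  set S : Set (X → X → ℝ) :=
    {D | IsPseudometric D ∧ (∀ x y, D x y ≤ d x y) ∧ matchNum D = m} with hS
  have hdS : d ∈ S := ⟨hd, fun x y => le_rfl, rfl⟩
  have hev : ∀ x y : X, Continuous fun D : X → X → ℝ => D x y :=
    fun x y => (continuous_apply y).comp (continuous_apply x)
  -- the box is compact
  have hK : IsCompact (Set.univ.pi fun x : X => Set.univ.pi fun y : X =>
      Set.Icc (0 : ℝ) (d x y)) :=
    isCompact_univ_pi fun x => isCompact_univ_pi fun y => isCompact_Icc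
  have hSsub : S ⊆ Set.univ.pi fun x : X => Set.univ.pi fun y : X =>
      Set.Icc (0 : ℝ) (d x y) := by
    rintro D ⟨hDp, hDle, _⟩
    simp only [Set.mem_univ_pi, Set.mem_Icc]
    exact fun x y => ⟨pseudo_nonneg hDp x y, hDle x y⟩
  -- S is closed
  have h1 : IsClosed {D : X → X → ℝ | IsPseudometric D} := by
    have heq : {D : X → X → ℝ | IsPseudometric D} =
        (⋂ x, {D : X → X → ℝ | D x x = 0}) ∩
        ((⋂ x, ⋂ y, {D : X → X → ℝ | D x y = D y x}) ∩
         (⋂ x, ⋂ y, ⋂ z, {D : X → X → ℝ | D x z ≤ D x y + D y z})) := by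
      ext D
      simp only [Set.mem_setOf_eq, Set.mem_inter_iff, Set.mem_iInter, IsPseudometric]
    rw [heq]
    refine IsClosed.inter (isClosed_iInter fun x => isClosed_eq (hev x x) continuous_const)
      (IsClosed.inter ?_ ?_)
    · exact isClosed_iInter fun x => isClosed_iInter fun y =>
        isClosed_eq (hev x y) (hev y x)
    · exact isClosed_iInter fun x => isClosed_iInter fun y => isClosed_iInter fun z =>
        isClosed_le (hev x z) ((hev x y).add (hev y z))
  have h2 : IsClosed {D : X → X → ℝ | ∀ x y, D x y ≤ d x y} := by
    have heq : {D : X → X → ℝ | ∀ x y, D x y ≤ d x y} =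
        ⋂ x, ⋂ y, {D : X → X → ℝ | D x y ≤ d x y} := by
      ext D; simp only [Set.mem_setOf_eq, Set.mem_iInter]
    rw [heq]
    exact isClosed_iInter fun x => isClosed_iInter fun y =>
      isClosed_le (hev x y) continuous_const
  have h3 : IsClosed {D : X → X → ℝ | matchNum D = m} := by
    have heq : {D : X → X → ℝ | matchNum D = m} =
        (⋂ π ∈ {π : X → X | IsMatching π}, {D : X → X → ℝ | m ≤ matchVal D π}) ∩
        (⋃ π ∈ {π : X → X | IsMatching π}, {D : X → X → ℝ | matchVal D π = m}) := by
      ext D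
      simp only [Set.mem_setOf_eq, Set.mem_inter_iff, Set.mem_iInter, Set.mem_iUnion,
        matchNum_eq_iff hX D m]
      constructor
      · rintro ⟨hall, π, hπ, hval⟩
        exact ⟨hall, π, hπ, hval⟩
      · rintro ⟨hall, π, hπ, hval⟩
        exact ⟨hall, π, hπ, hval⟩
    rw [heq]
    refine IsClosed.inter (isClosed_biInter fun π _ =>
      isClosed_le continuous_const (continuous_matchVal π)) ?_
    exact Set.Finite.isClosed_biUnion (Set.toFinite _)
      fun π _ => isClosed_eq (continuous_matchVal π) continuous_const
  have hclosed : IsClosed S := by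
    have : S = {D : X → X → ℝ | IsPseudometric D} ∩
        ({D : X → X → ℝ | ∀ x y, D x y ≤ d x y} ∩ {D : X → X → ℝ | matchNum D = m}) := by
      ext D; simp only [hS, Set.mem_setOf_eq, Set.mem_inter_iff, and_assoc]
    rw [this]
    exact h1.inter (h2.inter h3)
  have hScomp : IsCompact S := hK.of_isClosed_subset hclosed hSsub
  -- minimize the total sum over S
  have hΦcont : Continuous fun D : X → X → ℝ => ∑ x, ∑ y, D x y :=
    continuous_finset_sum _ fun x _ => continuous_finset_sum _ fun y _ => hev x y
  obtain ⟨D, hDS, hmin⟩ := hScomp.exists_isMinOn ⟨d, hdS⟩ hΦcont.continuousOn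
  obtain ⟨hDp, hDle, hDnum⟩ := hDS
  refine ⟨D, hDp, hDle, hDnum, ?_⟩
  intro D' hD'p hD'le hne
  have hle : matchNum D' ≤ matchNum D := matchNum_mono hX hD'le
  rcases lt_or_eq_of_le hle with h | h
  · exact h
  · exfalso
    have hD'S : D' ∈ S :=
      ⟨hD'p, fun x y => (hD'le x y).trans (hDle x y), h.trans hDnum⟩
    have hstrict : ∃ x y, D' x y < D x y := by
      by_contra hcon
      push_neg at hcon
      exact hne (funext fun x => funext fun y => le_antisymm (hD'le x y) (hcon x y))
    obtain ⟨x₀, y₀, hxy⟩ := hstrict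
    have hΦ : (∑ x, ∑ y, D' x y) < ∑ x, ∑ y, D x y := by
      refine Finset.sum_lt_sum (fun i _ => Finset.sum_le_sum fun j _ => hD'le i j)
        ⟨x₀, Finset.mem_univ _, ?_⟩
      exact Finset.sum_lt_sum (fun j _ => hD'le x₀ j) ⟨y₀, Finset.mem_univ _, hxy⟩
    exact absurd (hmin hD'S) (not_le.2 hΦ)
end

section
/- Let D be a pseudometric on a finite set X of even cardinality with the property that for any pseudometric D' on X with D' ≤ D (pointwise) and D' ≠ D one has m(X,D') < m(X,D). Then for all distinct points i,j ∈ X, the pair {i,j} belongs to some minimal matching of (X,D). -/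
open Filter Topology

section

variable {X : Type*}

namespace IsPseudometric

variable {D : X → X → ℝ}

lemma dist_self (hD : IsPseudometric D) (x : X) : D x x = 0 := hD.1 x

lemma symm (hD : IsPseudometric D) (x y : X) : D x y = D y x := hD.2.1 x y

lemma triangle (hD : IsPseudometric D) (x y z : X) : D x z ≤ D x y + D y z := hD.2.2 x y z

lemma nonneg (hD : IsPseudometric D) (x y : X) : 0 ≤ D x y := by
  linarith [hD.triangle x y x, hD.dist_self x, hD.symm y x]

end IsPseudometric

lemma IsMatching.conj {Y : Type*} {f : Y → Y} (hf : IsMatching f) (e : X ≃ Y) :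
    IsMatching (e.symm ∘ f ∘ e) :=
  ⟨fun x => by simp [hf.1 _], fun x h => hf.2 (e x) (by simpa [Equiv.symm_apply_eq] using h)⟩

lemma exists_isMatching_of_even_card [Fintype X] (hX : Even (Fintype.card X)) :
    ∃ π : X → X, IsMatching π := by
  obtain ⟨k, hk⟩ := hX
  have hcard : Fintype.card X = Fintype.card (Fin k × Bool) := by simp [hk, mul_two]
  have hflip : IsMatching fun p : Fin k × Bool => (p.1, !p.2) :=
    ⟨fun p => by simp, fun p h => by simpa using congrArg Prod.snd h⟩
  exact ⟨_, hflip.conj (Fintype.equivOfCardEq hcard)⟩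

/-- `D` with an extra edge of length `c` between `i` and `j`: the length of the shortest path
that uses this edge at most once. -/
noncomputable def shortcut (D : X → X → ℝ) (i j : X) (c : ℝ) (x y : X) : ℝ :=
  min (D x y) (min (D x i + c + D j y) (D x j + c + D i y))

lemma shortcut_le (D : X → X → ℝ) (i j : X) (c : ℝ) (x y : X) : shortcut D i j c x y ≤ D x y :=
  min_le_left _ _

lemma shortcut_eq {D : X → X → ℝ} {i j : X} {c : ℝ} {x y : X} (hi : D x y ≤ D x i + c + D j y)
    (hj : D x y ≤ D x j + c + D i y) : shortcut D i j c x y = D x y :=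
  min_eq_left (le_min hi hj)

lemma isPseudometric_shortcut {D : X → X → ℝ} (hD : IsPseudometric D) (i j : X) {c : ℝ}
    (hc : 0 ≤ c) : IsPseudometric (shortcut D i j c) := by
  obtain ⟨h0, hs, htr⟩ := id hD
  have hnn := hD.nonneg
  refine ⟨fun x => ?_, fun x y => ?_, fun x y z => ?_⟩
  · rw [shortcut_eq (by linarith [h0 x, hnn x i, hnn j x]) (by linarith [h0 x, hnn x j, hnn i x]),
      h0]
  · simp only [shortcut, hs y x, hs y i, hs j x, hs y j, hs i x]
    rw [min_comm (_ + _ + _)]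
    ring_nf
  · have h₁ : shortcut D i j c x z ≤ D x z := shortcut_le D i j c x z
    have h₂ : shortcut D i j c x z ≤ D x i + c + D j z :=
      (min_le_right _ _).trans (min_le_left _ _)
    have h₃ : shortcut D i j c x z ≤ D x j + c + D i z :=
      (min_le_right _ _).trans (min_le_right _ _)
    simp only [shortcut, min_add, add_min, le_min_iff] at h₁ h₂ h₃ ⊢
    refine ⟨⟨?_, ?_, ?_⟩, ⟨?_, ?_, ?_⟩, ?_, ?_, ?_⟩ <;>
      linarith [htr x y z, htr j y z, htr i y z, htr x y i, htr x y j, htr x j z, htr x i z,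
        hnn j y, hnn y i, hnn i y, hnn y j]

lemma sub_le_shortcut {D : X → X → ℝ} (hD : IsPseudometric D) (i j : X) {t : ℝ} (ht : 0 ≤ t)
    (x y : X) : D x y - t ≤ shortcut D i j (D i j - t) x y := by
  obtain ⟨-, hs, htr⟩ := hD
  refine le_min (by linarith) (le_min ?_ ?_) <;>
    linarith [htr x i y, htr i j y, htr x j y, htr j i y, hs j i]

section Matching

variable [Fintype X]

def IsMinimalMatching (D : X → X → ℝ) (π : X → X) : Prop :=
  IsMatching π ∧ matchVal D π = matchNum D

lemma finite_matchVals (D : X → X → ℝ) :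
    {r | ∃ π : X → X, IsMatching π ∧ r = matchVal D π}.Finite :=
  (Set.finite_range (matchVal D)).subset <| by rintro _ ⟨π, -, rfl⟩; exact ⟨π, rfl⟩

lemma matchNum_le_matchVal (D : X → X → ℝ) {π : X → X} (hπ : IsMatching π) :
    matchNum D ≤ matchVal D π :=
  csInf_le (finite_matchVals D).bddBelow ⟨π, hπ, rfl⟩

lemma le_matchNum (hX : Even (Fintype.card X)) {D : X → X → ℝ} {r : ℝ}
    (h : ∀ π : X → X, IsMatching π → r ≤ matchVal D π) : r ≤ matchNum D := by
  obtain ⟨π, hπ⟩ := exists_isMatching_of_even_card hX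
  exact le_csInf ⟨_, π, hπ, rfl⟩ fun _ ⟨π, hπ, hr⟩ => hr ▸ h π hπ

lemma exists_isMinimalMatching (hX : Even (Fintype.card X)) (D : X → X → ℝ) :
    ∃ π : X → X, IsMinimalMatching D π := by
  obtain ⟨π, hπ⟩ := exists_isMatching_of_even_card hX
  have hne : {r | ∃ π : X → X, IsMatching π ∧ r = matchVal D π}.Nonempty := ⟨_, π, hπ, rfl⟩
  obtain ⟨π, hπ, hval⟩ := hne.csInf_mem (finite_matchVals D)
  exact ⟨π, hπ, hval.symm⟩

lemma matchVal_congr {D D' : X → X → ℝ} {π : X → X} (h : ∀ x, D' x (π x) = D x (π x)) :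
    matchVal D' π = matchVal D π := by
  simp only [matchVal, h]

lemma matchVal_sub_le {D D' : X → X → ℝ} {t : ℝ} (h : ∀ x y, D x y - t ≤ D' x y) (π : X → X) :
    matchVal D π - Fintype.card X * t / 2 ≤ matchVal D' π := by
  have := Finset.sum_le_sum fun x (_ : x ∈ Finset.univ) => h x (π x)
  simp only [Finset.sum_sub_distrib, Finset.sum_const, Finset.card_univ, nsmul_eq_mul] at this
  simp only [matchVal]
  linarith

lemma IsMatching.exists_rematch {D : X → X → ℝ} (hs : ∀ x y, D x y = D y x) {π : X → X}
    (hπ : IsMatching π) {a b : X} (hab : a ≠ b) (hb : π a ≠ b) :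
    ∃ π', IsMatching π' ∧ π' a = b ∧
      matchVal D π' = matchVal D π + (D a b + D (π a) (π b) - D a (π a) - D b (π b)) := by
  classical
  obtain ⟨hinv, hfix⟩ := id hπ
  set τ := Equiv.swap (π a) b
  have hπba : π b ≠ a := fun h => hb (by rw [← h, hinv])
  have hπab : π a ≠ π b := hinv.injective.ne hab
  have τa : τ a = a := Equiv.swap_apply_of_ne_of_ne (hfix a).symm hab
  have τb : τ b = π a := Equiv.swap_apply_right _ _
  have τπa : τ (π a) = b := Equiv.swap_apply_left _ _
  have τπb : τ (π b) = π b := Equiv.swap_apply_of_ne_of_ne hπab.symm (hfix b)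
  have hfar : ∀ x ∉ ({a, b, π a, π b} : Finset X), τ (π (τ x)) = π x := by
    intro x hx
    simp only [Finset.mem_insert, Finset.mem_singleton, not_or] at hx
    rw [Equiv.swap_apply_of_ne_of_ne hx.2.2.1 hx.2.1]
    exact Equiv.swap_apply_of_ne_of_ne (fun h => hx.1 (by rw [← hinv x, h, hinv]))
      (fun h => hx.2.2.2 (by rw [← h, hinv]))
  refine ⟨τ ∘ π ∘ τ, by simpa [τ, Equiv.symm_swap] using hπ.conj τ, by simp [τa, τπa], ?_⟩
  have hdiff : ∑ x, (D x (τ (π (τ x))) - D x (π x)) =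
      ∑ x ∈ {a, b, π a, π b}, (D x (τ (π (τ x))) - D x (π x)) :=
    (Finset.sum_subset (Finset.subset_univ _) fun x _ hx => by rw [hfar x hx, sub_self]).symm
  rw [Finset.sum_insert (by simp [hab, (hfix a).symm, hπba.symm]),
    Finset.sum_insert (by simp [hb.symm, (hfix b).symm]), Finset.sum_insert (by simp [hπab]),
    Finset.sum_singleton, Finset.sum_sub_distrib] at hdiff
  simp only [τa, τb, τπa, τπb, hinv a, hinv b] at hdiff
  simp only [matchVal, Function.comp_apply]
  linarith [hs b a, hs (π a) a, hs (π b) (π a), hs (π b) b]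

end Matching

section Minimal

variable [Fintype X] {D : X → X → ℝ} {π : X → X}

lemma IsMinimalMatching.exists_apply_eq_of_le (hs : ∀ x y, D x y = D y x)
    (hπ : IsMinimalMatching D π) {a b : X} (hab : a ≠ b)
    (hle : D a b + D (π a) (π b) ≤ D a (π a) + D b (π b)) :
    ∃ π', IsMinimalMatching D π' ∧ π' a = b := by
  by_cases hb : π a = b
  · exact ⟨π, hπ, hb⟩
  obtain ⟨π', hπ', hπ'a, hval⟩ := hπ.1.exists_rematch hs hab hb
  exact ⟨π', ⟨hπ', le_antisymm (by linarith [hπ.2]) (matchNum_le_matchVal D hπ')⟩, hπ'a⟩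

lemma IsMinimalMatching.exists_apply_eq_of_dist_eq_add (hD : IsPseudometric D)
    (hπ : IsMinimalMatching D π) {i j : X} (hij : i ≠ j) (h : D i (π i) = D i j + D j (π i)) :
    ∃ π', IsMinimalMatching D π' ∧ π' i = j :=
  hπ.exists_apply_eq_of_le hD.symm hij (by linarith [hD.triangle (π i) j (π j), hD.symm (π i) j])

/-- Exchanging the pairs `{x, π x}` and `{i, π i}` moves a geodesic `x → i → j → π x` of a pair
so that it starts at `i`. -/
lemma IsMinimalMatching.exists_dist_eq_add_of_dist_eq_add (hD : IsPseudometric D)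
    (hπ : IsMinimalMatching D π) {i j x : X} (h : D x (π x) = D x i + D i j + D j (π x)) :
    ∃ π', IsMinimalMatching D π' ∧ D i (π' i) = D i j + D j (π' i) := by
  obtain ⟨h0, hs, htr⟩ := hD
  by_cases hxi : x = i
  · subst hxi
    exact ⟨π, hπ, by linarith [h0 x]⟩
  by_cases hπx : π x = i
  · have hπi : π i = x := by rw [← hπx, hπ.1.1]
    refine ⟨π, hπ, ?_⟩
    rw [hπi]
    rw [hπx] at h
    linarith [htr j i x, htr i j x, hs j i, hs i x]
  obtain ⟨π', hπ', hπ'i, hval⟩ :=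
    hπ.1.exists_rematch hs (Ne.symm hπx) (hπ.1.1.injective.ne (Ne.symm hxi))
  rw [hπ.1.1 x] at hval
  have hM := matchNum_le_matchVal D hπ'
  have hgeo : D i (π x) ≤ D i j + D j (π x) := htr _ _ _
  have hchange : D (π i) x ≤ D (π i) i + D i x := htr _ _ _
  refine ⟨π', ⟨hπ', ?_⟩, hπ'i ▸ ?_⟩ <;> linarith [hπ.2, hs (π i) i, hs (π x) x, hs x i]

lemma IsMinimalMatching.exists_apply_eq_of_dist_eq_add_add (hD : IsPseudometric D)
    (hπ : IsMinimalMatching D π) {i j x : X} (hij : i ≠ j)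
    (h : D x (π x) = D x i + D i j + D j (π x)) : ∃ π', IsMinimalMatching D π' ∧ π' i = j :=
  let ⟨_, hπ', h'⟩ := hπ.exists_dist_eq_add_of_dist_eq_add hD h
  hπ'.exists_apply_eq_of_dist_eq_add hD hij h'

end Minimal

/-- For small `t`, the shortcut leaves the pairs of minimal matchings untouched, and every
other matching exceeds `matchNum D` by more than the loss of at most `t` per pair. -/
lemma eventually_matchNum_le_matchVal_shortcut [Fintype X] {D : X → X → ℝ}
    (hD : IsPseudometric D) {i j : X}
    (hgap : ∀ π, IsMinimalMatching D π → ∀ x, D x (π x) < D x i + D i j + D j (π x)) :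
    ∀ᶠ t in 𝓝[>] 0, ∀ π, IsMatching π → matchNum D ≤ matchVal (shortcut D i j (D i j - t)) π := by
  refine eventually_all.2 fun π => eventually_imp_distrib_left.2 fun hπ => ?_
  by_cases hmin : matchVal D π = matchNum D
  · have hpair : ∀ᶠ t in 𝓝[>] 0, ∀ x, shortcut D i j (D i j - t) x (π x) = D x (π x) := by
      refine eventually_all.2 fun x => ?_
      have hgap' (y : X) : ∀ᶠ t in 𝓝[>] (0 : ℝ), t < D y i + D i j + D j (π y) - D y (π y) :=
        (eventually_lt_nhds (by linarith [hgap π ⟨hπ, hmin⟩ y])).filter_mono nhdsWithin_le_nhds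
      filter_upwards [hgap' x, hgap' (π x)] with t hx hπx
      rw [hπ.1 x] at hπx
      exact shortcut_eq (by linarith)
        (by linarith [hD.symm (π x) i, hD.symm j x, hD.symm (π x) x])
    filter_upwards [hpair] with t ht
    rw [matchVal_congr ht, hmin]
  · have hlt : matchNum D < matchVal D π := (matchNum_le_matchVal D hπ).lt_of_ne' hmin
    have hnear : ∀ᶠ t in 𝓝 0, matchNum D < matchVal D π - Fintype.card X * t / 2 :=
      continuousAt_const.eventually_lt (by fun_prop) (by simpa using hlt)
    filter_upwards [hnear.filter_mono nhdsWithin_le_nhds, self_mem_nhdsWithin] with t ht ht0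
    exact ht.le.trans (matchVal_sub_le (sub_le_shortcut hD i j ht0.le) π)

end

/-- If `D` is a pseudometric on `X` (even finite cardinality) such that every pseudometric
`D' ≤ D` with `D' ≠ D` has a strictly smaller matching number, then every pair of distinct
points `{i,j}` belongs to some minimal matching of `(X,D)`. -/
theorem stmt6 {X : Type*} [Fintype X] (hX : Even (Fintype.card X))
    (D : X → X → ℝ) (hD : IsPseudometric D)
    (hmin : ∀ D' : X → X → ℝ, IsPseudometric D' → (∀ x y, D' x y ≤ D x y) → D' ≠ D →
      matchNum D' < matchNum D) :
    ∀ i j : X, i ≠ j → ∃ π : X → X, IsMatching π ∧ matchVal D π = matchNum D ∧ π i = j := by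
  intro i j hij
  by_contra! hcon
  have hgap : ∀ π, IsMinimalMatching D π → ∀ x, D x (π x) < D x i + D i j + D j (π x) := by
    intro π hπ x
    refine lt_of_le_of_ne (by linarith [hD.triangle x i (π x), hD.triangle i j (π x)]) fun h => ?_
    obtain ⟨π', hπ', hπ'i⟩ := hπ.exists_apply_eq_of_dist_eq_add_add hD hij h
    exact hcon π' hπ'.1 hπ'.2 hπ'i
  have hij_pos : 0 < D i j := by
    obtain ⟨π, hπ⟩ := exists_isMinimalMatching hX D
    linarith [hgap π hπ i, hD.dist_self i, hD.triangle j i (π i), hD.symm j i]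
  have hsmall : ∀ᶠ t in 𝓝[>] 0, 0 < t ∧ t < D i j :=
    (eventually_mem_nhdsWithin (a := 0)).and
      ((eventually_lt_nhds hij_pos).filter_mono nhdsWithin_le_nhds)
  obtain ⟨t, ⟨ht0, htij⟩, hle⟩ :=
    (hsmall.and (eventually_matchNum_le_matchVal_shortcut hD hgap)).exists
  have hne : shortcut D i j (D i j - t) ≠ D := fun h => by
    have : shortcut D i j (D i j - t) i j ≤ D i i + (D i j - t) + D j j :=
      (min_le_right _ _).trans (min_le_left _ _)
    rw [h, hD.dist_self, hD.dist_self] at this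
    linarith
  exact (hmin _ (isPseudometric_shortcut hD i j (by linarith)) (shortcut_le D i j _) hne).not_ge
    (le_matchNum hX hle)
end
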